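/- arXiv:1510.00886 — 5 statements merged into one kernel-verified Lean document; each statement's English description precedes it below -/
import Mathlib

section
/- For all natural numbers n ≥ 1, the sum Σ_{s=0}^n (n choose s)^2/(1+2s) is at least (2n choose n)/(n+1) + (2n choose n)*n^2/((n+1)^3*(2n-1)). -/
/-!
Write `N = n + 1` and `x = n - 2s`, so that `1 + 2s = N - x`. Since
`(N - x) (N + x) (N² + x²) = N⁴ - x⁴ ≤ N⁴`, the `s`-th term is at least
`C(n,s)² (N + x) (N² + x²) / N⁴`. The weights `C(n,s)²` are invariant under `s ↦ n - s`,
which negates `x`, so the odd moments `∑ₛ xᵏ C(n,s)²` vanish; the zeroth moment is `C(2n,n)`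
by Vandermonde, and absorption `s C(n,s) = n C(n-1,s-1)` gives the second as
`n² C(2n,n) / (2n - 1)`.
-/

open Finset

def chooseSqMoment (n k : ℕ) : ℤ :=
  ∑ s ∈ range (n + 1), ((n : ℤ) - 2 * s) ^ k * (n.choose s : ℤ) ^ 2

theorem chooseSqMoment_zero (n : ℕ) : chooseSqMoment n 0 = n.centralBinom := by
  simp [chooseSqMoment, Nat.centralBinom_eq_two_mul_choose, ← Nat.sum_range_choose_sq]

theorem chooseSqMoment_of_odd {k : ℕ} (hk : Odd k) (n : ℕ) : chooseSqMoment n k = 0 := by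
  have hreflect :=
    sum_range_reflect (fun s => ((n : ℤ) - 2 * s) ^ k * (n.choose s : ℤ) ^ 2) (n + 1)
  have hneg : ∀ s ∈ range (n + 1),
      ((n : ℤ) - 2 * (n + 1 - 1 - s : ℕ)) ^ k * (n.choose (n + 1 - 1 - s) : ℤ) ^ 2
        = -(((n : ℤ) - 2 * s) ^ k * (n.choose s : ℤ) ^ 2) := by
    intro s hs
    have hsn : s ≤ n := Nat.lt_succ_iff.mp (mem_range.mp hs)
    rw [Nat.add_sub_cancel, Nat.choose_symm hsn, Nat.cast_sub hsn,
      show (n : ℤ) - 2 * (n - s) = -(n - 2 * s) by ring, hk.neg_pow, neg_mul]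
  rw [sum_congr rfl hneg, sum_neg_distrib] at hreflect
  unfold chooseSqMoment
  linarith

theorem sum_range_sq_mul_choose_sq (m : ℕ) :
    ∑ s ∈ range (m + 2), s ^ 2 * (m + 1).choose s ^ 2 = (m + 1) ^ 2 * m.centralBinom := by
  have habsorb : ∀ i ∈ range (m + 1),
      (i + 1) ^ 2 * (m + 1).choose (i + 1) ^ 2 = (m + 1) ^ 2 * m.choose i ^ 2 := fun i _ => by
    rw [← mul_pow, ← mul_pow, mul_comm, ← Nat.add_one_mul_choose_eq]
  rw [sum_range_succ', sum_congr rfl habsorb, ← mul_sum, Nat.sum_range_choose_sq,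
    Nat.centralBinom_eq_two_mul_choose]
  simp

theorem chooseSqMoment_two (n : ℕ) :
    (2 * n - 1) * chooseSqMoment n 2 = n ^ 2 * n.centralBinom := by
  rcases n with _ | m
  · simp [chooseSqMoment]
  have hexpand : chooseSqMoment (m + 1) 2 = 2 * (m + 1) * chooseSqMoment (m + 1) 1
      - (m + 1) ^ 2 * chooseSqMoment (m + 1) 0
      + 4 * ∑ s ∈ range (m + 2), ((s ^ 2 * (m + 1).choose s ^ 2 : ℕ) : ℤ) := by
    simp only [chooseSqMoment, mul_sum, ← sum_sub_distrib, ← sum_add_distrib]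
    exact sum_congr rfl fun s _ => by push_cast; ring
  have hrec : ((m + 1) * (m + 1).centralBinom : ℤ) = 2 * (2 * m + 1) * m.centralBinom := by
    exact_mod_cast Nat.succ_mul_centralBinom_succ m
  rw [hexpand, chooseSqMoment_of_odd odd_one, chooseSqMoment_zero, ← Nat.cast_sum,
    sum_range_sq_mul_choose_sq]
  push_cast
  linear_combination (-2 * ((m : ℤ) + 1) ^ 2) * hrec

theorem add_mul_sq_add_sq_div_pow_four_le_one_div_sub {K : Type*} [Field K] [LinearOrder K]
    [IsStrictOrderedRing K] {a x : K} (ha : 0 < a) (hx : x < a) :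
    (a + x) * (a ^ 2 + x ^ 2) / a ^ 4 ≤ 1 / (a - x) := by
  rw [div_le_div_iff₀ (by positivity) (by linarith)]
  nlinarith [sq_nonneg (x ^ 2)]

theorem two_mul_natCast_sub_one_ne_zero (n : ℕ) : (2 * n - 1 : ℚ) ≠ 0 := by
  intro h
  have : 2 * n = 1 := by exact_mod_cast (show ((2 * n : ℕ) : ℚ) = 1 by push_cast; linarith)
  omega

theorem sum_choose_sq_mul_add_mul_sq_add_sq (n : ℕ) :
    ∑ s ∈ range (n + 1),
        (n.choose s : ℚ) ^ 2 * ((n + 1 + (n - 2 * s)) * ((n + 1) ^ 2 + (n - 2 * s) ^ 2))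
      = (n + 1 : ℚ) ^ 3 * (2 * n).choose n
        + (n + 1 : ℚ) * (n ^ 2 * (2 * n).choose n / (2 * n - 1)) := by
  have hM2 : (chooseSqMoment n 2 : ℚ) = n ^ 2 * (2 * n).choose n / (2 * n - 1) := by
    rw [eq_div_iff (two_mul_natCast_sub_one_ne_zero n), ← Nat.centralBinom_eq_two_mul_choose,
      mul_comm]
    exact_mod_cast chooseSqMoment_two n
  have hmoments : ∑ s ∈ range (n + 1),
        (n.choose s : ℚ) ^ 2 * ((n + 1 + (n - 2 * s)) * ((n + 1) ^ 2 + (n - 2 * s) ^ 2))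
      = (n + 1 : ℚ) ^ 3 * chooseSqMoment n 0 + (n + 1 : ℚ) ^ 2 * chooseSqMoment n 1
        + (n + 1 : ℚ) * chooseSqMoment n 2 + chooseSqMoment n 3 := by
    simp only [chooseSqMoment, Int.cast_sum, mul_sum, ← sum_add_distrib]
    exact sum_congr rfl fun s _ => by push_cast; ring
  rw [hmoments, hM2, chooseSqMoment_zero, chooseSqMoment_of_odd odd_one,
    chooseSqMoment_of_odd (by decide), Nat.centralBinom_eq_two_mul_choose]
  push_cast
  ring

theorem sum_choose_sq_mul_add_mul_sq_add_sq_div_le (n : ℕ) :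
    (∑ s ∈ range (n + 1),
        (n.choose s : ℚ) ^ 2 * ((n + 1 + (n - 2 * s)) * ((n + 1) ^ 2 + (n - 2 * s) ^ 2)))
        / (n + 1 : ℚ) ^ 4
      ≤ ∑ s ∈ range (n + 1), (n.choose s : ℚ) ^ 2 / (1 + 2 * s) := by
  rw [sum_div]
  refine sum_le_sum fun s hs => ?_
  have hsn : (s : ℚ) ≤ n := by exact_mod_cast Nat.lt_succ_iff.mp (mem_range.mp hs)
  have hterm := add_mul_sq_add_sq_div_pow_four_le_one_div_sub
    (show (0 : ℚ) < n + 1 by positivity) (show (n : ℚ) - 2 * s < n + 1 by linarith)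
  rw [show (n + 1 : ℚ) - (n - 2 * s) = 1 + 2 * s by ring] at hterm
  calc _ = (n.choose s : ℚ) ^ 2
          * ((n + 1 + (n - 2 * s)) * ((n + 1) ^ 2 + (n - 2 * s) ^ 2) / (n + 1) ^ 4) := by ring
    _ ≤ (n.choose s : ℚ) ^ 2 * (1 / (1 + 2 * s)) := by gcongr
    _ = (n.choose s : ℚ) ^ 2 / (1 + 2 * s) := mul_one_div _ _

theorem A_lower_bound_general (n : ℕ) :
    ((2 * n).choose n : ℚ) / (n + 1)
        + ((2 * n).choose n : ℚ) * n ^ 2 / ((n + 1) ^ 3 * (2 * n - 1))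
      ≤ ∑ s ∈ Finset.range (n + 1), ((n.choose s : ℚ)) ^ 2 / (1 + 2 * s) := by
  have h2n := two_mul_natCast_sub_one_ne_zero n
  calc _ = ((n + 1 : ℚ) ^ 3 * (2 * n).choose n
          + (n + 1 : ℚ) * (n ^ 2 * (2 * n).choose n / (2 * n - 1))) / (n + 1 : ℚ) ^ 4 := by
        field_simp
    _ ≤ _ := by
        rw [← sum_choose_sq_mul_add_mul_sq_add_sq]
        exact sum_choose_sq_mul_add_mul_sq_add_sq_div_le n

theorem A_lower_bound (n : ℕ) (hn : 1 ≤ n) :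
    ((2 * n).choose n : ℚ) / (n + 1)
        + ((2 * n).choose n : ℚ) * n ^ 2 / ((n + 1) ^ 3 * (2 * n - 1))
      ≤ ∑ s ∈ Finset.range (n + 1), ((n.choose s : ℚ)) ^ 2 / (1 + 2 * s) :=
  A_lower_bound_general n
end

section
/- Let Q be a complex vector space with basis y_1,...,y_{u+v}, and let A_{u,v}Q ⊆ S^u Q ⊗ Λ^v Q be the span of all elements y_{m_1}···y_{m_u} ⊗ y_{n_1}∧···∧y_{n_v} where {m_1,...,m_u,n_1,...,n_v} = {1,...,u+v} (each index used exactly once). Then the restriction to A_{u,v}Q of the algebraic exterior derivative ∧_{u,v}: S^u Q ⊗ Λ^v Q → S^{u-1} Q ⊗ Λ^{v+1} Q, defined on monomials by l_1···l_u ⊗ ω ↦ Σ_s l_1···l̂_s···l_u ⊗ l_s ∧ ω, has rank (u+v-1 choose v). -/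
/-!
The differential sends a generator to a signed sum of generators,
`gen S ↦ ∑_{i ∉ S} ± gen (S ∪ {i})`, with sign `+` when `i` is the least index `0`.
Hence the coefficient of `gen (T ∪ {0})` in the image of `gen S`, for `0 ∉ S, T`, is `δ_{ST}`,
so the images of the generators with `0 ∉ S` are linearly independent. Because the
differential squares to zero, applying it to the image of `gen S'` writes the image of
`gen (S' ∪ {0})` through images of generators avoiding `0`. The rank is therefore the number
of `v`-subsets of `{1, …, u+v-1}`.
-/

open MvPolynomial TensorProduct

/-- The algebraic exterior derivative (Koszul differential)
`S^u Q ⊗ Λ^v Q → S^{u-1} Q ⊗ Λ^{v+1} Q`, given on monomials by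
`x^α ⊗ ω ↦ Σ_i ∂_i(x^α) ⊗ (x_i ∧ ω)`. -/
noncomputable def Kz (m : ℕ) :
    MvPolynomial (Fin m) ℂ ⊗[ℂ] ExteriorAlgebra ℂ (Fin m → ℂ) →ₗ[ℂ]
      MvPolynomial (Fin m) ℂ ⊗[ℂ] ExteriorAlgebra ℂ (Fin m → ℂ) :=
  ∑ i : Fin m, TensorProduct.map (pderiv i).toLinearMap
    (LinearMap.mulLeft ℂ (ExteriorAlgebra.ι ℂ (Pi.single i 1)))

/-- The generator of `A_{u,v}Q` indexed by the set `S` of wedge indices: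
`(∏_{i ∉ S} y_i) ⊗ (y_{n_1} ∧ ⋯ ∧ y_{n_v})` where `S = {n_1 < ⋯ < n_v}`. -/
noncomputable def gen (m : ℕ) (S : Finset (Fin m)) :
    MvPolynomial (Fin m) ℂ ⊗[ℂ] ExteriorAlgebra ℂ (Fin m → ℂ) :=
  (∏ i ∈ Sᶜ, X i) ⊗ₜ
    ((S.sort (· ≤ ·)).map fun i => ExteriorAlgebra.ι ℂ (Pi.single i 1)).prod

/-- The subspace `A_{u,v}Q` spanned by the elements
`y_{m_1}⋯y_{m_u} ⊗ y_{n_1}∧⋯∧y_{n_v}` with `{m_*} ⊔ {n_*} = {1,…,u+v}`. -/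
noncomputable def Asub (u v : ℕ) :
    Submodule ℂ (MvPolynomial (Fin (u + v)) ℂ ⊗[ℂ] ExteriorAlgebra ℂ (Fin (u + v) → ℂ)) :=
  Submodule.span ℂ {z | ∃ S : Finset (Fin (u + v)), S.card = v ∧ z = gen (u + v) S}

open Finset

theorem Finset.sort_insert_eq_orderedInsert {α : Type*} [LinearOrder α] {a : α} {s : Finset α}
    (h : a ∉ s) : (insert a s).sort = s.sort.orderedInsert (· ≤ ·) a :=
  List.Perm.eq_of_pairwise' (r := (· ≤ ·)) (pairwise_sort _ _)
    ((pairwise_sort _ _).orderedInsert a _)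
    ((sort_perm_toList _ _).trans ((toList_insert h).trans
      (((sort_perm_toList _ _).symm.cons a).trans (List.perm_orderedInsert _ a _).symm)))

namespace ExteriorAlgebra

variable {R M I : Type*} [CommRing R] [AddCommGroup M] [Module R M] [LinearOrder I]

theorem prod_map_ι_orderedInsert (e : I → M) (x : I) {l : List I}
    (hl : l.Pairwise (· ≤ ·)) :
    ((l.orderedInsert (· ≤ ·) x).map (ι R ∘ e)).prod
      = (-1 : R) ^ l.countP (· < x) • (ι R (e x) * (l.map (ι R ∘ e)).prod) := by
  induction l with
  | nil => simp
  | cons y t ih =>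
    rw [List.pairwise_cons] at hl
    by_cases hxy : x ≤ y
    · have hcount : (y :: t).countP (· < x) = 0 :=
        List.countP_eq_zero.2 fun z hz => by
          rcases List.mem_cons.1 hz with rfl | hz
          · simpa using hxy
          · simpa using hxy.trans (hl.1 z hz)
      simp [List.orderedInsert, hxy, hcount]
    · have hyx : y < x := lt_of_not_ge hxy
      have hswap : ι R (e y) * (ι R (e x) * (t.map (ι R ∘ e)).prod)
          = -(ι R (e x) * (ι R (e y) * (t.map (ι R ∘ e)).prod)) := by
        rw [← mul_assoc, ← mul_assoc, ← neg_mul, ← eq_neg_of_add_eq_zero_left (ι_add_mul_swap _ _)]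
      rw [List.orderedInsert_cons, if_neg hxy, List.map_cons, List.prod_cons, ih hl.2,
        Function.comp_apply, mul_smul_comm, hswap, List.map_cons, List.prod_cons,
        Function.comp_apply, List.countP_cons, if_pos (decide_eq_true hyx), pow_succ, mul_neg_one,
        neg_smul, smul_neg]

end ExteriorAlgebra

namespace Module.Basis

variable {R M I : Type*} [CommRing R] [AddCommGroup M] [Module R M] [LinearOrder I]

open ExteriorAlgebra in
theorem exteriorAlgebra_eq_prod (b : Basis I R M) (s : Finset I) :
    b.ExteriorAlgebra s = (s.sort.map (ι R ∘ b)).prod := by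
  rw [basis_apply_ofCard b rfl, ιMulti_family, ιMulti_apply,
    Set.powersetCard.ofFinEmbEquiv_symm_apply, ← Finset.listMap_orderEmbOfFin_finRange s rfl,
    List.map_map, ← List.ofFn_eq_map]
  rfl

open ExteriorAlgebra in
theorem ι_mul_exteriorAlgebra (b : Basis I R M) {i : I} {s : Finset I}
    (hi : i ∉ s) :
    ι R (b i) * b.ExteriorAlgebra s
      = (-1 : R) ^ #{j ∈ s | j < i} • b.ExteriorAlgebra (insert i s) := by
  have hcount : s.sort.countP (· < i) = #{j ∈ s | j < i} := by
    rw [← Multiset.coe_countP, Finset.sort_eq, Multiset.countP_eq_card_filter]; rfl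
  rw [b.exteriorAlgebra_eq_prod, b.exteriorAlgebra_eq_prod, Finset.sort_insert_eq_orderedInsert hi,
    prod_map_ι_orderedInsert _ _ (Finset.pairwise_sort _ _), hcount, smul_smul, ← pow_add,
    ← two_mul, pow_mul, neg_one_sq, one_pow, one_smul]

end Module.Basis

namespace MvPolynomial

theorem pderiv_pderiv_comm {R σ : Type*} [CommRing R] (i j : σ) (p : MvPolynomial σ R) :
    pderiv i (pderiv j p) = pderiv j (pderiv i p) := by
  have hbracket : ⁅pderiv (R := R) i, pderiv (R := R) j⁆ = 0 := by
    refine derivation_ext fun k => ?_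
    classical
    rw [Derivation.commutator_apply, pderiv_X, pderiv_X, Pi.single_apply, Pi.single_apply]
    split_ifs <;> simp
  exact sub_eq_zero.1 <| by rw [← Derivation.commutator_apply, hbracket, Derivation.zero_apply]

theorem pderiv_prod_X {R σ : Type*} [CommSemiring R] [DecidableEq σ] (i : σ) (s : Finset σ) :
    pderiv i (∏ j ∈ s, (X j : MvPolynomial σ R)) = if i ∈ s then ∏ j ∈ s.erase i, X j else 0 := by
  induction s using Finset.induction_on with
  | empty => simp
  | insert k s hk ih =>
    rw [prod_insert hk, (pderiv i).leibniz, ih, pderiv_X]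
    by_cases hik : i = k
    · subst hik
      simp [hk]
    · have hks : k ∉ s.erase i := fun h => hk (mem_of_mem_erase h)
      simp [hik, Finset.erase_insert_of_ne (Ne.symm hik), prod_insert hks]

end MvPolynomial

section Koszul

variable {m : ℕ}

theorem gen_eq_tmul (S : Finset (Fin m)) :
    gen m S = (∏ i ∈ Sᶜ, X i) ⊗ₜ[ℂ] (Pi.basisFun ℂ (Fin m)).ExteriorAlgebra S := by
  rw [Module.Basis.exteriorAlgebra_eq_prod]
  simp [gen, Function.comp_def]

theorem Kz_tmul (p : MvPolynomial (Fin m) ℂ) (w : ExteriorAlgebra ℂ (Fin m → ℂ)) :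
    Kz m (p ⊗ₜ w) = ∑ i, pderiv i p ⊗ₜ (ExteriorAlgebra.ι ℂ (Pi.single i 1) * w) := by
  simp [Kz]

theorem Kz_gen (S : Finset (Fin m)) :
    Kz m (gen m S) = ∑ i ∈ Sᶜ, (-1 : ℂ) ^ #{j ∈ S | j < i} • gen m (insert i S) := by
  rw [gen_eq_tmul, Kz_tmul]
  simp_rw [pderiv_prod_X, ite_tmul]
  rw [sum_ite_mem, univ_inter]
  refine sum_congr rfl fun i hi => ?_
  rw [← Pi.basisFun_apply, Module.Basis.ι_mul_exteriorAlgebra _ (mem_compl.1 hi), tmul_smul,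
    gen_eq_tmul, compl_insert]

theorem Kz_Kz (z : MvPolynomial (Fin m) ℂ ⊗[ℂ] ExteriorAlgebra ℂ (Fin m → ℂ)) :
    Kz m (Kz m z) = 0 := by
  induction z using TensorProduct.induction_on with
  | zero => simp
  | add x y hx hy => rw [map_add, map_add, hx, hy, add_zero]
  | tmul p w =>
    have hanti (i j : Fin m) :
        pderiv j (pderiv i p) ⊗ₜ[ℂ] (ExteriorAlgebra.ι ℂ (Pi.single j 1) *
          (ExteriorAlgebra.ι ℂ (Pi.single i 1) * w))
        = -(pderiv i (pderiv j p) ⊗ₜ[ℂ] (ExteriorAlgebra.ι ℂ (Pi.single i 1) *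
          (ExteriorAlgebra.ι ℂ (Pi.single j 1) * w))) := by
      rw [pderiv_pderiv_comm, ← tmul_neg, ← mul_assoc, ← mul_assoc, ← neg_mul,
        ← eq_neg_of_add_eq_zero_left (ExteriorAlgebra.ι_add_mul_swap _ _)]
    rw [Kz_tmul, map_sum]
    simp_rw [Kz_tmul]
    set s := ∑ i, ∑ j, pderiv j (pderiv i p) ⊗ₜ[ℂ] (ExteriorAlgebra.ι ℂ (Pi.single j 1) *
          (ExteriorAlgebra.ι ℂ (Pi.single i 1) * w)) with hs
    have hneg : s = -s := by
      rw [hs]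
      nth_rewrite 1 [sum_comm]
      rw [← sum_neg_distrib]
      exact sum_congr rfl fun j _ => (sum_congr rfl fun i _ => hanti i j).trans (sum_neg_distrib _)
    have h2 : (2 : ℂ) • s = 0 := by
      rw [two_smul]; nth_rewrite 2 [hneg]; exact add_neg_cancel _
    exact (smul_eq_zero.1 h2).resolve_left two_ne_zero

noncomputable def tensorBasis (m : ℕ) : Module.Basis ((Fin m →₀ ℕ) × Finset (Fin m)) ℂ
    (MvPolynomial (Fin m) ℂ ⊗[ℂ] ExteriorAlgebra ℂ (Fin m → ℂ)) :=
  (basisMonomials (Fin m) ℂ).tensorProduct (Pi.basisFun ℂ (Fin m)).ExteriorAlgebra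

theorem gen_eq_tensorBasis (S : Finset (Fin m)) :
    gen m S = tensorBasis m (∑ i ∈ Sᶜ, Finsupp.single i 1, S) := by
  rw [gen_eq_tmul, tensorBasis, Module.Basis.tensorProduct_apply, coe_basisMonomials]
  exact congrArg (· ⊗ₜ _) (monomial_sum_one _ _).symm

noncomputable def genCoeff (T : Finset (Fin m)) :
    MvPolynomial (Fin m) ℂ ⊗[ℂ] ExteriorAlgebra ℂ (Fin m → ℂ) →ₗ[ℂ] ℂ :=
  (tensorBasis m).coord (∑ i ∈ Tᶜ, Finsupp.single i 1, T)

theorem genCoeff_gen (S T : Finset (Fin m)) : genCoeff T (gen m S) = if T = S then 1 else 0 := by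
  rw [genCoeff, gen_eq_tensorBasis, Module.Basis.coord_apply, Module.Basis.repr_self,
    Finsupp.single_apply]
  by_cases h : T = S
  · simp [h]
  · rw [if_neg h, if_neg fun h' => h (congrArg Prod.snd h').symm]

variable {i₀ : Fin m}

theorem Kz_gen_eq_of_isBot (h₀ : IsBot i₀) {S : Finset (Fin m)} (hS : i₀ ∉ S) :
    Kz m (gen m S) = gen m (insert i₀ S)
      + ∑ i ∈ Sᶜ.erase i₀, (-1 : ℂ) ^ #{j ∈ S | j < i} • gen m (insert i S) := by
  have hsign : #{j ∈ S | j < i₀} = 0 :=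
    card_eq_zero.2 (filter_eq_empty_iff.2 fun j _ => not_lt.2 (h₀ j))
  rw [Kz_gen, ← add_sum_erase _ _ (mem_compl.2 hS), hsign, pow_zero, one_smul]

theorem Kz_gen_insert_of_isBot (h₀ : IsBot i₀) {S : Finset (Fin m)} (hS : i₀ ∉ S) :
    Kz m (gen m (insert i₀ S))
      = -∑ i ∈ Sᶜ.erase i₀, (-1 : ℂ) ^ #{j ∈ S | j < i} • Kz m (gen m (insert i S)) := by
  have h := congrArg (Kz m) (Kz_gen_eq_of_isBot h₀ hS)
  rw [Kz_Kz, map_add, map_sum] at h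
  simp only [map_smul] at h
  exact eq_neg_of_add_eq_zero_left h.symm

theorem genCoeff_insert_Kz_gen (h₀ : IsBot i₀) {S T : Finset (Fin m)} (hS : i₀ ∉ S)
    (hT : i₀ ∉ T) : genCoeff (insert i₀ T) (Kz m (gen m S)) = if T = S then 1 else 0 := by
  have hrest : ∀ i ∈ Sᶜ.erase i₀, genCoeff (insert i₀ T) (gen m (insert i S)) = 0 := by
    intro i hi
    rw [genCoeff_gen, if_neg]
    intro h
    have : i₀ ∈ insert i S := h ▸ mem_insert_self i₀ T
    rcases mem_insert.1 this with h' | h'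
    · exact (ne_of_mem_erase hi) h'.symm
    · exact hS h'
  rw [Kz_gen_eq_of_isBot h₀ hS, map_add, map_sum, genCoeff_gen]
  rw [sum_eq_zero fun i hi => by rw [map_smul, hrest i hi, smul_zero], add_zero]
  by_cases h : T = S
  · rw [if_pos (congrArg _ h), if_pos h]
  · rw [if_neg h, if_neg fun h' => h (by rw [← erase_insert hT, h', erase_insert hS])]

theorem linearIndependent_Kz_gen (h₀ : IsBot i₀) :
    LinearIndependent ℂ fun S : {S : Finset (Fin m) // i₀ ∉ S} => Kz m (gen m S) := by
  let coeffs := LinearMap.pi fun T : {S : Finset (Fin m) // i₀ ∉ S} => genCoeff (insert i₀ T.1)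
  have hcomp : coeffs ∘ (fun S : {S : Finset (Fin m) // i₀ ∉ S} => Kz m (gen m S))
      = Pi.basisFun ℂ _ := by
    funext S T
    rw [Function.comp_apply, LinearMap.pi_apply, genCoeff_insert_Kz_gen h₀ S.2 T.2,
      Pi.basisFun_apply, Pi.single_apply]
    simp only [Subtype.ext_iff]
  exact .of_comp coeffs (hcomp ▸ (Pi.basisFun ℂ _).linearIndependent)

end Koszul

theorem map_Kz_Asub {u v : ℕ} {i₀ : Fin (u + v)} (h₀ : IsBot i₀) :
    (Asub u v).map (Kz (u + v)) = Submodule.span ℂ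
      (Set.range fun S : powersetCard v ({i₀}ᶜ : Finset (Fin (u + v))) => Kz _ (gen _ S)) := by
  rw [Asub, Submodule.map_span]
  refine le_antisymm (Submodule.span_le.2 ?_)
    (Submodule.span_mono fun _ ⟨S, hS⟩ => ⟨gen _ S, ⟨S, (mem_powersetCard.1 S.2).2, rfl⟩, hS⟩)
  rintro _ ⟨_, ⟨S, hcard, rfl⟩, rfl⟩
  by_cases hS : i₀ ∈ S
  · rw [← insert_erase hS, Kz_gen_insert_of_isBot h₀ (notMem_erase i₀ S)]
    refine Submodule.neg_mem _ (Submodule.sum_mem _ fun i hi => Submodule.smul_mem _ _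
      (Submodule.subset_span ⟨⟨insert i (S.erase i₀), mem_powersetCard.2 ⟨?_, ?_⟩⟩, rfl⟩))
    · exact subset_compl_singleton.2 fun h =>
        (mem_insert.1 h).elim (fun h => ne_of_mem_erase hi h.symm) (notMem_erase i₀ S)
    · rw [card_insert_of_notMem (mem_compl.1 (mem_of_mem_erase hi)), card_erase_add_one hS,
        hcard]
  · exact Submodule.subset_span ⟨⟨S, mem_powersetCard.2 ⟨subset_compl_singleton.2 hS, hcard⟩⟩, rfl⟩

theorem koszul_rank_Auv_general (u v : ℕ) (hu : 1 ≤ u) :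
    Module.finrank ℂ (Submodule.map (Kz (u + v)) (Asub u v)) = (u + v - 1).choose v := by
  have : NeZero (u + v) := ⟨by omega⟩
  have h₀ : IsBot (0 : Fin (u + v)) := Fin.zero_le
  let f : powersetCard v ({0}ᶜ : Finset (Fin (u + v))) → {S : Finset (Fin (u + v)) // 0 ∉ S} :=
    fun S => ⟨S.1, subset_compl_singleton.1 (mem_powersetCard.1 S.2).1⟩
  have hf : Function.Injective f := fun _ _ h => Subtype.ext (congrArg (fun S => S.1) h)
  have hli := (linearIndependent_Kz_gen h₀).comp f hf
  simp only [Function.comp_def, f] at hli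
  rw [map_Kz_Asub h₀, finrank_span_eq_card hli, Fintype.card_coe, card_powersetCard, card_compl,
    card_singleton, Fintype.card_fin]

/-- The restriction of the exterior derivative `∧_{u,v}` to `A_{u,v}Q` has rank
`(u+v-1) choose v`. -/
theorem koszul_rank_Auv (u v : ℕ) (hu : 1 ≤ u) (hv : 1 ≤ v) :
    Module.finrank ℂ (Submodule.map (Kz (u + v)) (Asub u v)) = (u + v - 1).choose v :=
  koszul_rank_Auv_general u v hu
end

section
/- Let V = C^d, P = x_1···x_d, 1 ≤ k < d, 1 ≤ p < d. The rank of the Koszul Young flattening P_{k,d-k}^{∧p}: S^k V* ⊗ Λ^p V → S^{d-k-1}V ⊗ Λ^{p+1}V equals S(p,d,k) := Σ_{s=max{0,p-k}}^{min{p,d-k-1}} (d choose s)(d-s choose d-k+p-2s)(d-k+p-2s-1 choose p-s). -/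
open MvPolynomial TensorProduct

/-- The iterated partial-derivative operator `∂^α`. -/
noncomputable def Dop {m : ℕ} (α : Fin m → ℕ) :
    Module.End ℂ (MvPolynomial (Fin m) ℂ) :=
  (List.ofFn fun i : Fin m =>
    (((pderiv i).toLinearMap : Module.End ℂ (MvPolynomial (Fin m) ℂ)) ^ (α i))).prod

/-- The flattening of `P`, sending a constant-coefficient differential operator
(encoded by a polynomial in the dual variables via the monomial basis) to its
application to `P`.  Restricted to homogeneous operators of degree `k` this is
the catalecticant `P_{k,d-k} : S^k V^* → S^{d-k} V`. -/
noncomputable def flat {m : ℕ} (P : MvPolynomial (Fin m) ℂ) :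
    MvPolynomial (Fin m) ℂ →ₗ[ℂ] MvPolynomial (Fin m) ℂ :=
  (MvPolynomial.basisMonomials (Fin m) ℂ).constr ℂ fun α => Dop (⇑α) P

/-- The subspace `S^k V^* ⊗ Λ^p V` inside polynomials ⊗ exterior algebra. -/
noncomputable def SkLp (m k p : ℕ) :
    Submodule ℂ (MvPolynomial (Fin m) ℂ ⊗[ℂ] ExteriorAlgebra ℂ (Fin m → ℂ)) :=
  Submodule.span ℂ {z | ∃ q ∈ homogeneousSubmodule (Fin m) ℂ k,
    ∃ w ∈ ((LinearMap.range (ExteriorAlgebra.ι ℂ (M := Fin m → ℂ))) ^ p :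
      Submodule ℂ (ExteriorAlgebra ℂ (Fin m → ℂ))), z = q ⊗ₜ w}

/-- The Koszul Young flattening `P_{k,d-k}^{∧p}`, as the composition of
`P_{k,d-k} ⊗ id` with the exterior derivative; it is to be restricted to
`SkLp`. -/
noncomputable def KYF {m : ℕ} (P : MvPolynomial (Fin m) ℂ) :
    MvPolynomial (Fin m) ℂ ⊗[ℂ] ExteriorAlgebra ℂ (Fin m → ℂ) →ₗ[ℂ]
      MvPolynomial (Fin m) ℂ ⊗[ℂ] ExteriorAlgebra ℂ (Fin m → ℂ) :=
  (Kz m).comp (TensorProduct.map (flat P) LinearMap.id)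

/-!
Since `∂^α (x_1 ⋯ x_d)` is the square-free monomial `x_{[d] \ supp α}` when `α` is square-free
and `0` otherwise, the image of the flattening is spanned by the vectors
`v(T, J) = Kz (x_T ⊗ e_J)` with `|T| = d - k` and `|J| = p`. Call `(T, J)` good when the least
element `m` of `T ∆ J` lies in `T`. Applying `Kz ∘ Kz = 0` to `x_{T+m} ⊗ e_{J-m}` writes the
`v` of a pair that is not good through `v`'s of good pairs, and the `v` of good pairs are
linearly independent, because the coefficient of `x_{T-m} ⊗ e_{J+m}` vanishes on all the other
ones. The rank is therefore the number of good pairs. A good pair is determined by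
`S = T ∩ J`, `D = T ∆ J` and the `(p - |S|)`-set `J \ T ⊆ D \ {min D}`, which gives `S(p,d,k)`.
-/

open scoped symmDiff

local notation "𝐞" i:max => ExteriorAlgebra.ι ℂ (Pi.single i 1 : Fin _ → ℂ)

namespace KoszulYoung

section GoodPairs

open Finset

variable {α : Type*} [LinearOrder α]

def IsLeading (T J : Finset α) (m : α) : Prop := m ∈ T \ J ∧ ∀ x ∈ T ∆ J, m ≤ x

def IsGoodPair (T J : Finset α) : Prop := ∃ m, IsLeading T J m

lemma IsLeading.mem_symmDiff {T J : Finset α} {m : α} (h : IsLeading T J m) : m ∈ T ∆ J :=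
  Finset.mem_symmDiff.mpr (Or.inl (mem_sdiff.mp h.1))

lemma IsLeading.eq_min' {T J : Finset α} {m : α} (h : IsLeading T J m) :
    m = (T ∆ J).min' ⟨m, h.mem_symmDiff⟩ :=
  le_antisymm (h.2 _ (min'_mem _ _)) (min'_le _ _ h.mem_symmDiff)

lemma IsLeading.unique {T J T' J' : Finset α} {m m' : α} (h : IsLeading T J m)
    (h' : IsLeading T' J' m') (hD : T ∆ J = T' ∆ J') : m = m' :=
  le_antisymm (h.2 _ (hD ▸ h'.mem_symmDiff)) (h'.2 _ (hD ▸ h.mem_symmDiff))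

lemma isLeading_min' {T J : Finset α} (h : (T ∆ J).Nonempty) (hT : (T ∆ J).min' h ∈ T) :
    IsLeading T J ((T ∆ J).min' h) := by
  refine ⟨?_, fun x hx => min'_le _ x hx⟩
  have := min'_mem _ h
  rw [mem_symmDiff] at this
  exact mem_sdiff.mpr ⟨hT, by tauto⟩

lemma IsGoodPair.sdiff_nonempty {T J : Finset α} (h : IsGoodPair T J) : (T \ J).Nonempty :=
  let ⟨m, hm⟩ := h; ⟨m, hm.1⟩

lemma symmDiff_erase_insert {T J : Finset α} {m : α} (hm : m ∈ T \ J) :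
    T.erase m ∆ insert m J = T ∆ J := by
  rw [mem_sdiff] at hm
  ext x
  by_cases hx : x = m <;> simp [mem_symmDiff, hx, hm.1, hm.2]

lemma eq_of_erase_eq_of_insert_eq {T J T' J' : Finset α} {m i : α} (h : IsLeading T J m)
    (h' : IsGoodPair T' J') (hi : i ∈ T' \ J') (hT : T'.erase i = T.erase m)
    (hJ : insert i J' = insert m J) : T' = T ∧ J' = J ∧ i = m := by
  obtain ⟨m', hm'⟩ := h'
  have hD : T ∆ J = T' ∆ J' := by
    rw [← symmDiff_erase_insert h.1, ← symmDiff_erase_insert hi, hT, hJ]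
  have hmm' : m = m' := h.unique hm' hD
  obtain rfl : i = m := by
    rcases mem_insert.mp (hJ ▸ mem_insert_self m J : m ∈ insert i J') with h | h
    · exact h.symm
    · exact absurd h (hmm' ▸ (mem_sdiff.mp hm'.1).2)
  obtain ⟨hiT', hiJ'⟩ := mem_sdiff.mp hi
  obtain ⟨hiT, hiJ⟩ := mem_sdiff.mp h.1
  refine ⟨?_, ?_, rfl⟩
  · rw [← insert_erase hiT', hT, insert_erase hiT]
  · rw [← erase_insert hiJ', hJ, erase_insert hiJ]

lemma isLeading_exchange {T J : Finset α} {m i : α} (hm : m ∈ J \ T)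
    (hmin : ∀ x ∈ T ∆ J, m ≤ x) (hi : i ∈ T \ J) :
    IsLeading ((insert m T).erase i) (insert i (J.erase m)) m := by
  obtain ⟨hmJ, hmT⟩ := mem_sdiff.mp hm
  obtain ⟨hiT, hiJ⟩ := mem_sdiff.mp hi
  have him : i ≠ m := ne_of_mem_of_not_mem hiT hmT
  have hD : (insert m T).erase i ∆ insert i (J.erase m) = T ∆ J := by
    rw [symmDiff_erase_insert (by simp [hiT, him, hiJ]), symmDiff_comm,
      symmDiff_erase_insert hm, symmDiff_comm]
  exact ⟨by simp [him.symm], fun x hx => hmin x (hD ▸ hx)⟩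

lemma card_exchange {T J : Finset α} {m i : α} (hm : m ∈ J \ T) (hi : i ∈ T \ J) :
    #((insert m T).erase i) = #T ∧ #(insert i (J.erase m)) = #J := by
  obtain ⟨hmJ, hmT⟩ := mem_sdiff.mp hm
  obtain ⟨hiT, hiJ⟩ := mem_sdiff.mp hi
  have := card_pos.mpr ⟨m, hmJ⟩
  rw [card_erase_of_mem (mem_insert_of_mem hiT), card_insert_of_notMem hmT,
    card_insert_of_notMem (fun h => hiJ (mem_of_mem_erase h)), card_erase_of_mem hmJ]
  omega

lemma card_eq_card_inter_add (T J : Finset α) :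
    #T = #(T ∩ J) + #(T \ J) ∧ #J = #(T ∩ J) + #(J \ T) ∧ #(T ∆ J) = #(T \ J) + #(J \ T) :=
  ⟨(card_inter_add_card_sdiff T J).symm, by rw [inter_comm, card_inter_add_card_sdiff],
    card_union_of_disjoint disjoint_sdiff_sdiff⟩

lemma disjoint_inter_symmDiff (T J : Finset α) : Disjoint (T ∩ J) (T ∆ J) := by
  rw [disjoint_left]
  intro x
  simp only [mem_inter, mem_symmDiff]
  tauto

lemma inter_union_symmDiff_sdiff (T J : Finset α) :
    (T ∩ J) ∪ ((T ∆ J) \ (J \ T)) = T ∧ (T ∩ J) ∪ (J \ T) = J := by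
  constructor <;> ext x <;> simp only [mem_inter, mem_union, mem_sdiff, mem_symmDiff] <;> tauto

lemma union_sdiff_union_of_disjoint {S D A : Finset α} (hSD : Disjoint S D) (hA : A ⊆ D) :
    (S ∪ (D \ A)) ∩ (S ∪ A) = S ∧ (S ∪ (D \ A)) ∆ (S ∪ A) = D ∧
      (S ∪ A) \ (S ∪ (D \ A)) = A ∧ (S ∪ (D \ A)) \ (S ∪ A) = D \ A := by
  rw [disjoint_left] at hSD
  refine ⟨?_, ?_, ?_, ?_⟩ <;> ext x <;>
    simp only [mem_inter, mem_union, mem_sdiff, mem_symmDiff] <;>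
    have := @hSD x <;> have := @hA x <;> tauto

variable [Fintype α]

instance (T J : Finset α) : Decidable (IsGoodPair T J) :=
  inferInstanceAs (Decidable (∃ m, m ∈ T \ J ∧ ∀ x ∈ T ∆ J, m ≤ x))

variable (α) in
def goodPairs (t p : ℕ) : Finset (Finset α × Finset α) :=
  {TJ | #TJ.1 = t ∧ #TJ.2 = p ∧ IsGoodPair TJ.1 TJ.2}

lemma mem_goodPairs {t p : ℕ} {TJ : Finset α × Finset α} :
    TJ ∈ goodPairs α t p ↔ #TJ.1 = t ∧ #TJ.2 = p ∧ IsGoodPair TJ.1 TJ.2 := by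
  simp [goodPairs]

lemma card_filter_isGoodPair_inter_symmDiff {S D : Finset α} (hSD : Disjoint S D)
    (hD : D.Nonempty) (a : ℕ) :
    #{TJ : Finset α × Finset α | IsGoodPair TJ.1 TJ.2 ∧ TJ.1 ∩ TJ.2 = S ∧ TJ.1 ∆ TJ.2 = D ∧
        #(TJ.2 \ TJ.1) = a} = (#D - 1).choose a := by
  rw [← card_erase_of_mem (min'_mem D hD), ← card_powersetCard]
  refine card_nbij' (fun TJ => TJ.2 \ TJ.1) (fun A => (S ∪ (D \ A), S ∪ A)) ?_ ?_ ?_ ?_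
  · rintro ⟨T, J⟩ hTJ
    simp only [coe_filter, mem_univ, true_and, Set.mem_ofPred_eq] at hTJ
    obtain ⟨⟨m, hm⟩, rfl, rfl, rfl⟩ := hTJ
    simp only [mem_coe, mem_powersetCard, and_true]
    intro x hx
    refine mem_erase.mpr ⟨?_, symmDiff_subset_sdiff' hx⟩
    rintro rfl
    rw [← hm.eq_min'] at hx
    exact (mem_sdiff.mp hx).2 (mem_sdiff.mp hm.1).1
  · intro A hA
    simp only [mem_coe, mem_powersetCard, subset_erase] at hA
    obtain ⟨⟨hAD, hmA⟩, rfl⟩ := hA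
    obtain ⟨hinter, hsymm, hJT, hTJ⟩ := union_sdiff_union_of_disjoint hSD hAD
    simp only [coe_filter, mem_univ, true_and, Set.mem_ofPred_eq, hinter, hsymm, hJT]
    refine ⟨⟨D.min' hD, ?_, fun x hx => min'_le D x (hsymm ▸ hx)⟩, trivial⟩
    rw [hTJ]
    exact mem_sdiff.mpr ⟨min'_mem D hD, hmA⟩
  · rintro ⟨T, J⟩ hTJ
    simp only [coe_filter, mem_univ, true_and, Set.mem_ofPred_eq] at hTJ
    obtain ⟨-, rfl, rfl, -⟩ := hTJ
    obtain ⟨hT, hJ⟩ := inter_union_symmDiff_sdiff T J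
    simp only [hT, hJ]
  · intro A hA
    simp only [mem_coe, mem_powersetCard, subset_erase] at hA
    exact (union_sdiff_union_of_disjoint hSD hA.1.1).2.2.1

lemma card_goodPairs_filter_inter_eq {t p : ℕ} {S : Finset α} (hsp : #S ≤ p) (hst : #S < t) :
    #{TJ ∈ goodPairs α t p | TJ.1 ∩ TJ.2 = S}
      = (Fintype.card α - #S).choose (t + p - 2 * #S) * (t + p - 2 * #S - 1).choose (p - #S) := by
  rw [card_eq_sum_card_fiberwise (f := fun TJ => TJ.1 ∆ TJ.2)
    (t := powersetCard (t + p - 2 * #S) Sᶜ)]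
  · rw [sum_const_nat (m := (t + p - 2 * #S - 1).choose (p - #S)), card_powersetCard, card_compl]
    intro D hD
    rw [mem_powersetCard, subset_compl_iff_disjoint_left] at hD
    rw [← hD.2, ← card_filter_isGoodPair_inter_symmDiff hD.1 (card_pos.mp (by omega)) (p - #S),
      filter_filter]
    congr 1
    ext ⟨T, J⟩
    simp only [mem_filter, mem_univ, true_and, mem_goodPairs]
    have := card_eq_card_inter_add T J
    constructor
    · rintro ⟨⟨hT, hJ, hgood⟩, rfl, rfl⟩
      exact ⟨hgood, rfl, rfl, by omega⟩
    · rintro ⟨hgood, rfl, rfl, hJT⟩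
      exact ⟨⟨by omega, by omega, hgood⟩, rfl, rfl⟩
  · rintro ⟨T, J⟩ hTJ
    simp only [coe_filter, mem_goodPairs, Set.mem_ofPred_eq] at hTJ
    obtain ⟨⟨hT, hJ, -⟩, rfl⟩ := hTJ
    have := card_eq_card_inter_add T J
    simp only [mem_coe, mem_powersetCard, subset_compl_iff_disjoint_left]
    exact ⟨disjoint_inter_symmDiff T J, by omega⟩

lemma card_goodPairs_filter_card_inter {t p s : ℕ} (hsp : s ≤ p) (hst : s < t) :
    #{TJ ∈ goodPairs α t p | #(TJ.1 ∩ TJ.2) = s} = (Fintype.card α).choose s *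
      ((Fintype.card α - s).choose (t + p - 2 * s) * (t + p - 2 * s - 1).choose (p - s)) := by
  rw [card_eq_sum_card_fiberwise (f := fun TJ => TJ.1 ∩ TJ.2) (t := powersetCard s univ)]
  · rw [sum_const_nat, card_powersetCard, card_univ]
    intro S hS
    obtain ⟨-, rfl⟩ := mem_powersetCard.mp hS
    rw [filter_filter, ← card_goodPairs_filter_inter_eq hsp hst]
    congr 1
    exact filter_congr fun TJ _ => ⟨fun h => h.2, fun h => ⟨h ▸ rfl, h⟩⟩
  · intro TJ hTJ
    simp only [coe_filter, Set.mem_ofPred_eq] at hTJ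
    simp [hTJ.2]

lemma IsGoodPair.card_bounds {T J : Finset α} (h : IsGoodPair T J) :
    #T + #J ≤ Fintype.card α + #(T ∩ J) ∧ #(T ∩ J) ≤ #J ∧ #(T ∩ J) < #T := by
  have := card_eq_card_inter_add T J
  have := h.sdiff_nonempty.card_pos
  have := card_union_add_card_inter T J
  have := card_le_univ (T ∪ J)
  omega

theorem card_goodPairs {t p : ℕ} (ht : 1 ≤ t) :
    #(goodPairs α t p) = ∑ s ∈ Icc (p + t - Fintype.card α) (min p (t - 1)),
      (Fintype.card α).choose s * (Fintype.card α - s).choose (t + p - 2 * s)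
        * (t + p - 2 * s - 1).choose (p - s) := by
  rw [card_eq_sum_card_fiberwise (f := fun TJ => #(TJ.1 ∩ TJ.2))
    (t := Icc (p + t - Fintype.card α) (min p (t - 1)))]
  · refine sum_congr rfl fun s hs => ?_
    rw [mem_Icc, le_min_iff] at hs
    rw [card_goodPairs_filter_card_inter hs.2.1 (by omega), mul_assoc]
  · intro TJ hTJ
    obtain ⟨hT, hJ, hgood⟩ := mem_goodPairs.mp hTJ
    have := hgood.card_bounds
    simp only [mem_coe, mem_Icc, le_min_iff]
    omega

end GoodPairs

section SquarefreeMonomial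

variable {σ : Type*}

noncomputable def sqfreeExp (T : Finset σ) : σ →₀ ℕ := ∑ i ∈ T, Finsupp.single i 1

noncomputable def sqfree (T : Finset σ) : MvPolynomial σ ℂ := monomial (sqfreeExp T) 1

lemma basisMonomials_sqfreeExp (T : Finset σ) : basisMonomials σ ℂ (sqfreeExp T) = sqfree T :=
  rfl

lemma degree_sqfreeExp (T : Finset σ) : (sqfreeExp T).degree = T.card := by
  simp [sqfreeExp, map_sum]

variable [DecidableEq σ]

lemma sqfreeExp_apply (T : Finset σ) (j : σ) : sqfreeExp T j = if j ∈ T then 1 else 0 := by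
  simp [sqfreeExp, Finsupp.finsetSum_apply, Finsupp.single_apply]

lemma sqfreeExp_injective : Function.Injective (sqfreeExp (σ := σ)) := by
  intro S T h
  ext j
  have := congr($h j)
  simp only [sqfreeExp_apply] at this
  split_ifs at this <;> simp_all

lemma support_sqfreeExp (T : Finset σ) : (sqfreeExp T).support = T := by
  ext j
  simp [sqfreeExp_apply]

lemma sqfreeExp_sub (T S : Finset σ) : sqfreeExp T - sqfreeExp S = sqfreeExp (T \ S) := by
  ext j
  simp only [Finsupp.tsub_apply, sqfreeExp_apply, Finset.mem_sdiff]
  split_ifs <;> simp_all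

lemma sqfreeExp_support_eq {α : σ →₀ ℕ} (hα : ∀ i, α i ≤ 1) : sqfreeExp α.support = α := by
  ext j
  have := hα j
  simp only [sqfreeExp_apply, Finsupp.mem_support_iff]
  split_ifs <;> omega

lemma pderiv_sqfree (i : σ) (T : Finset σ) :
    pderiv i (sqfree T) = if i ∈ T then sqfree (T.erase i) else 0 := by
  rw [sqfree, pderiv_monomial, sqfreeExp_apply]
  split_ifs with hi
  · rw [← Finset.sum_singleton (fun j => Finsupp.single j 1) i, ← sqfreeExp, sqfreeExp_sub,
      Finset.sdiff_singleton_eq_erase, Nat.cast_one, mul_one, sqfree]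
  · simp

lemma prod_X_eq_sqfree_univ [Fintype σ] : ∏ i, X i = sqfree (Finset.univ : Finset σ) := by
  rw [sqfree, ← prod_X_pow_eq_monomial, support_sqfreeExp]
  simp [sqfreeExp_apply]

end SquarefreeMonomial

section Flattening

lemma pderiv_pow_monomial {R σ : Type*} [CommSemiring R] [DecidableEq σ] (i : σ) (n : ℕ)
    (β : σ →₀ ℕ) (c : R) :
    (((pderiv i).toLinearMap : Module.End R (MvPolynomial σ R)) ^ n) (monomial β c)
      = monomial (β - Finsupp.single i n) (c * (β i).descFactorial n) := by
  induction n with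
  | zero => simp
  | succ n ih =>
    rw [pow_succ', Module.End.mul_apply, ih, Derivation.coeFn_coe, pderiv_monomial, tsub_tsub,
      ← Finsupp.single_add, Finsupp.tsub_apply, Finsupp.single_eq_same, Nat.descFactorial_succ,
      mul_assoc, Nat.cast_mul, mul_comm ((β i - n : ℕ) : R)]

lemma list_prod_pderiv_pow_monomial {R σ : Type*} [CommSemiring R] [DecidableEq σ] (α : σ → ℕ)
    {l : List σ} (hl : l.Nodup) (β : σ →₀ ℕ) (c : R) :
    ((l.map fun i => ((pderiv i).toLinearMap : Module.End R (MvPolynomial σ R)) ^ α i).prod)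
        (monomial β c)
      = monomial (β - ∑ i ∈ l.toFinset, Finsupp.single i (α i))
          (c * ∏ i ∈ l.toFinset, ((β i).descFactorial (α i) : R)) := by
  induction l with
  | nil => simp
  | cons j l ih =>
    obtain ⟨hj, hl⟩ := List.nodup_cons.mp hl
    have hj' : j ∉ l.toFinset := by simpa using hj
    have hβj : (β - ∑ i ∈ l.toFinset, Finsupp.single i (α i)) j = β j := by
      rw [Finsupp.tsub_apply, Finsupp.finsetSum_apply, Finset.sum_eq_zero fun i hi =>
        Finsupp.single_eq_of_ne (ne_of_mem_of_not_mem hi hj').symm, tsub_zero]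
    rw [List.map_cons, List.prod_cons, Module.End.mul_apply, ih hl, pderiv_pow_monomial, hβj,
      List.toFinset_cons, Finset.sum_insert hj', Finset.prod_insert hj', tsub_tsub, add_comm,
      mul_assoc, mul_comm (∏ _ ∈ _, _)]

variable {d : ℕ}

lemma Dop_monomial (α β : Fin d →₀ ℕ) (c : ℂ) :
    Dop ⇑α (monomial β c) = monomial (β - α) (c * ∏ i, ((β i).descFactorial (α i) : ℂ)) := by
  rw [Dop, List.ofFn_eq_map, list_prod_pderiv_pow_monomial _ (List.nodup_finRange d),
    List.toFinset_finRange, Finsupp.univ_sum_single]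

lemma flat_monomial (P : MvPolynomial (Fin d) ℂ) (α : Fin d →₀ ℕ) (c : ℂ) :
    flat P (monomial α c) = c • Dop ⇑α P := by
  have h : monomial α c = c • basisMonomials (Fin d) ℂ α := by
    rw [coe_basisMonomials, smul_monomial, smul_eq_mul, mul_one]
  rw [flat, h, map_smul, Module.Basis.constr_basis]

lemma flat_prod_X_monomial (α : Fin d →₀ ℕ) (c : ℂ) :
    flat (∏ i, X i) (monomial α c) = if ∀ i, α i ≤ 1 then c • sqfree α.supportᶜ else 0 := by
  rw [flat_monomial, prod_X_eq_sqfree_univ, sqfree, Dop_monomial]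
  simp only [sqfreeExp_apply, Finset.mem_univ, if_true, one_mul]
  split_ifs with hα
  · rw [Finset.prod_eq_one fun i _ => by
      rcases Nat.le_one_iff_eq_zero_or_eq_one.mp (hα i) with h | h <;> simp [h]]
    rw [← sqfreeExp_support_eq hα, sqfreeExp_sub, support_sqfreeExp, Finset.compl_eq_univ_sdiff,
      sqfree]
  · push Not at hα
    obtain ⟨i, hi⟩ := hα
    rw [Finset.prod_eq_zero (Finset.mem_univ i) (by simp [Nat.descFactorial_eq_zero_iff_lt, hi]),
      monomial_zero, smul_zero]

lemma flat_prod_X_sqfree (S : Finset (Fin d)) : flat (∏ i, X i) (sqfree S) = sqfree Sᶜ := by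
  have hS : ∀ i, sqfreeExp S i ≤ 1 := fun i => by rw [sqfreeExp_apply]; split_ifs <;> simp
  rw [sqfree, flat_prod_X_monomial, if_pos hS, support_sqfreeExp, one_smul]

lemma flat_prod_X_mem_span {k : ℕ} {q : MvPolynomial (Fin d) ℂ}
    (hq : q ∈ homogeneousSubmodule (Fin d) ℂ k) :
    flat (∏ i, X i) q ∈ Submodule.span ℂ (sqfree '' {T | T.card = d - k}) := by
  rw [← support_sum_monomial_coeff q, map_sum]
  refine Submodule.sum_mem _ fun α hα => ?_
  rw [flat_prod_X_monomial]
  split_ifs with hα1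
  · refine Submodule.smul_mem _ _ (Submodule.subset_span ⟨_, ?_, rfl⟩)
    have hdeg : α.degree = k := by
      by_contra hne
      exact Finsupp.mem_support_iff.mp hα
        (((mem_homogeneousSubmodule k q).mp hq).coeff_eq_zero hne)
    rw [← sqfreeExp_support_eq hα1, degree_sqfreeExp] at hdeg
    simp [Finset.card_compl, hdeg]
  · exact Submodule.zero_mem _

end Flattening

section Wedge

variable {d : ℕ}

noncomputable abbrev wedge : Module.Basis (Finset (Fin d)) ℂ (ExteriorAlgebra ℂ (Fin d → ℂ)) :=
  (Pi.basisFun ℂ (Fin d)).ExteriorAlgebra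

lemma ι_single_eq_wedge (i : Fin d) : 𝐞 i = wedge {i} := by
  simp [ExteriorAlgebra.basis_apply_ofCard _ (Finset.card_singleton i),
    ExteriorAlgebra.ιMulti_family, Set.powersetCard.ofFinEmbEquiv]

lemma ι_mul_wedge_of_mem {i : Fin d} {J : Finset (Fin d)} (h : i ∈ J) : 𝐞 i * wedge J = 0 := by
  rw [ι_single_eq_wedge]
  exact ExteriorAlgebra.basis_mul_of_not_disjoint _
    (Set.powersetCard.ofCard (Finset.card_singleton i)) (Set.powersetCard.ofCard rfl)
    (by simpa using h)

lemma ι_mul_wedge_of_notMem {i : Fin d} {J : Finset (Fin d)} (h : i ∉ J) :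
    ∃ ε : ℤˣ, 𝐞 i * wedge J = ((ε : ℤ) : ℂ) • wedge (insert i J) := by
  rw [ι_single_eq_wedge]
  have hdisj : Disjoint (Set.powersetCard.ofCard (Finset.card_singleton i)).val
      (Set.powersetCard.ofCard (rfl : J.card = J.card)).val := by simpa using h
  refine ⟨(Set.powersetCard.permOfDisjoint hdisj).sign, ?_⟩
  rw [Int.cast_smul_eq_zsmul, ← Units.smul_def]
  convert ExteriorAlgebra.basis_mul_of_disjoint _ _ _ hdisj using 3
  all_goals first | rfl | (rw [Set.powersetCard.coe_disjUnion]; simp)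

lemma exteriorPower_eq_span_wedge (p : ℕ) :
    ⋀[ℂ]^p (Fin d → ℂ) = Submodule.span ℂ (wedge '' {J | J.card = p}) := by
  rw [← exteriorPower.ιMulti_family_span_fixedDegree_of_span ℂ (Pi.basisFun ℂ (Fin d)).span_eq]
  congr 1
  ext x
  constructor
  · rintro ⟨s, rfl⟩
    exact ⟨s.1, s.2, ExteriorAlgebra.basis_apply_powersetCard _ s⟩
  · rintro ⟨J, hJ, rfl⟩
    exact ⟨Set.powersetCard.ofCard hJ, (ExteriorAlgebra.basis_apply_ofCard _ hJ).symm⟩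

lemma wedge_repr_ι_mul_ne_zero {i : Fin d} {J K : Finset (Fin d)}
    (h : wedge.repr (𝐞 i * wedge J) K ≠ 0) : i ∉ J ∧ insert i J = K := by
  by_cases hiJ : i ∈ J
  · simp [ι_mul_wedge_of_mem hiJ] at h
  obtain ⟨ε, hε⟩ := ι_mul_wedge_of_notMem hiJ
  rw [hε, map_smul, Module.Basis.repr_self, Finsupp.smul_apply, Finsupp.single_apply] at h
  exact ⟨hiJ, by simpa using h⟩

lemma wedge_repr_ι_mul_insert_ne_zero {i : Fin d} {J : Finset (Fin d)} (hiJ : i ∉ J) :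
    wedge.repr (𝐞 i * wedge J) (insert i J) ≠ 0 := by
  obtain ⟨ε, hε⟩ := ι_mul_wedge_of_notMem hiJ
  simp [hε, ε.ne_zero]

end Wedge

section KoszulDifferential

lemma pderiv_comm {R σ : Type*} [CommRing R] (i j : σ) (f : MvPolynomial σ R) :
    pderiv i (pderiv j f) = pderiv j (pderiv i f) := by
  classical
  have : ⁅pderiv i, pderiv j⁆ = (0 : Derivation R (MvPolynomial σ R) (MvPolynomial σ R)) :=
    MvPolynomial.derivation_ext fun k => by
      rw [Derivation.commutator_apply, pderiv_X, pderiv_X]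
      by_cases hj : j = k <;> by_cases hi : i = k <;> simp [hi, hj]
  rw [← sub_eq_zero, ← Derivation.commutator_apply, this, Derivation.zero_apply]

lemma Kz_comp_Kz (m : ℕ) : Kz m ∘ₗ Kz m = 0 := by
  set A : Fin m → Module.End ℂ _ := fun i =>
    TensorProduct.map (pderiv i).toLinearMap (LinearMap.mulLeft ℂ (𝐞 i))
  have hanti : ∀ i j, A i * A j + A j * A i = 0 := by
    intro i j
    have hcomm : (pderiv j).toLinearMap * (pderiv i).toLinearMap
        = ((pderiv i).toLinearMap * (pderiv j).toLinearMap : Module.End ℂ _) :=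
      LinearMap.ext fun f => pderiv_comm j i f
    have hswap : LinearMap.mulLeft ℂ (𝐞 i) * LinearMap.mulLeft ℂ (𝐞 j) +
        LinearMap.mulLeft ℂ (𝐞 j) * LinearMap.mulLeft ℂ (𝐞 i) = 0 :=
      LinearMap.ext fun w => by simp [← mul_assoc, ← add_mul, ExteriorAlgebra.ι_add_mul_swap]
    rw [← TensorProduct.map_mul, ← TensorProduct.map_mul, hcomm, ← TensorProduct.map_add_right,
      hswap, TensorProduct.map_zero_right]
  have hdiag : ∀ i, A i * A i = 0 := fun i => by simpa [← two_smul ℂ] using hanti i i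
  have hKK : Kz m * Kz m = ∑ ij : Fin m × Fin m, A ij.1 * A ij.2 := by
    rw [Kz, Finset.sum_mul_sum, ← Finset.sum_product']
    rfl
  change Kz m * Kz m = 0
  rw [hKK]
  refine Finset.sum_involution (fun ij _ => ij.swap) (fun ij _ => hanti ij.1 ij.2) ?_
    (by simp) (by simp)
  rintro ⟨i, j⟩ - hne hij
  obtain rfl : j = i := congrArg Prod.fst hij
  exact hne (hdiag j)

variable {d : ℕ}

lemma Kz_sqfree_tmul (T : Finset (Fin d)) (w : ExteriorAlgebra ℂ (Fin d → ℂ)) :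
    Kz d (sqfree T ⊗ₜ w) = ∑ i ∈ T, sqfree (T.erase i) ⊗ₜ (𝐞 i * w) := by
  rw [Kz, LinearMap.sum_apply, ← Finset.sum_subset (Finset.subset_univ T)]
  · refine Finset.sum_congr rfl fun i hi => ?_
    simp [pderiv_sqfree, hi]
  · intro i _ hi
    simp [pderiv_sqfree, hi]

end KoszulDifferential

section Rank

variable {d : ℕ}

noncomputable def koszulGen (TJ : Finset (Fin d) × Finset (Fin d)) :
    MvPolynomial (Fin d) ℂ ⊗[ℂ] ExteriorAlgebra ℂ (Fin d → ℂ) :=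
  Kz d (sqfree TJ.1 ⊗ₜ wedge TJ.2)

lemma map_KYF_SkLp {k : ℕ} (hkd : k ≤ d) (p : ℕ) :
    Submodule.map (KYF (∏ i, X i : MvPolynomial (Fin d) ℂ)) (SkLp d k p)
      = Submodule.span ℂ (koszulGen '' {TJ | TJ.1.card = d - k ∧ TJ.2.card = p}) := by
  apply le_antisymm
  · rw [SkLp, Submodule.map_span, Submodule.span_le]
    rintro _ ⟨_, ⟨q, hq, w, hw, rfl⟩, rfl⟩
    have hmem := Submodule.apply_mem_map₂ (TensorProduct.mk ℂ _ _) (flat_prod_X_mem_span hq)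
      ((exteriorPower_eq_span_wedge p).le hw)
    rw [Submodule.map₂_span_span] at hmem
    refine Submodule.span_mono ?_ (Submodule.apply_mem_span_image_of_mem_span (Kz d) hmem)
    rintro _ ⟨_, ⟨_, ⟨T, hT, rfl⟩, _, ⟨J, hJ, rfl⟩, rfl⟩, rfl⟩
    exact ⟨(T, J), ⟨hT, hJ⟩, rfl⟩
  · rw [Submodule.span_le]
    rintro _ ⟨⟨T, J⟩, ⟨hT, hJ⟩, rfl⟩
    have hq : sqfree Tᶜ ∈ homogeneousSubmodule (Fin d) ℂ k := by
      rw [mem_homogeneousSubmodule, sqfree]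
      refine isHomogeneous_monomial _ ?_
      rw [degree_sqfreeExp, Finset.card_compl, Fintype.card_fin]
      simp only at hT
      omega
    have hw : wedge J ∈ ⋀[ℂ]^p (Fin d → ℂ) := by
      rw [exteriorPower_eq_span_wedge]
      exact Submodule.subset_span ⟨J, hJ, rfl⟩
    refine ⟨sqfree Tᶜ ⊗ₜ wedge J, Submodule.subset_span ⟨_, hq, _, hw, rfl⟩, ?_⟩
    simp [KYF, koszulGen, flat_prod_X_sqfree]

lemma smul_koszulGen_eq_neg_sum {T J : Finset (Fin d)} {m : Fin d} (hm : m ∈ J \ T) :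
    ∃ ε : ℤˣ, ((ε : ℤ) : ℂ) • koszulGen (T, J)
      = -∑ i ∈ T, Kz d (sqfree ((insert m T).erase i) ⊗ₜ (𝐞 i * wedge (J.erase m))) := by
  obtain ⟨hmJ, hmT⟩ := Finset.mem_sdiff.mp hm
  obtain ⟨ε, hε⟩ := ι_mul_wedge_of_notMem (Finset.notMem_erase m J)
  refine ⟨ε, eq_neg_of_add_eq_zero_left ?_⟩
  have h0 := LinearMap.congr_fun (Kz_comp_Kz d) (sqfree (insert m T) ⊗ₜ wedge (J.erase m))
  rwa [LinearMap.comp_apply, Kz_sqfree_tmul, Finset.sum_insert hmT, Finset.erase_insert hmT, hε,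
    Finset.insert_erase hmJ, tmul_smul, map_add, map_smul, map_sum] at h0

lemma koszulGen_mem_span_goodPairs {t p : ℕ} {T J : Finset (Fin d)} (hT : T.card = t)
    (hJ : J.card = p) :
    koszulGen (T, J) ∈ Submodule.span ℂ
      (koszulGen '' (goodPairs (Fin d) t p : Set (Finset (Fin d) × Finset (Fin d)))) := by
  set W := Submodule.span ℂ
    (koszulGen '' (goodPairs (Fin d) t p : Set (Finset (Fin d) × Finset (Fin d))))
  have mem_of_good : ∀ {T' J' : Finset (Fin d)}, T'.card = t → J'.card = p →
      IsGoodPair T' J' → koszulGen (T', J') ∈ W := fun hT' hJ' hg =>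
    Submodule.subset_span ⟨_, mem_goodPairs.mpr ⟨hT', hJ', hg⟩, rfl⟩
  rcases (T ∆ J).eq_empty_or_nonempty with hD | hD
  · obtain rfl := Finset.symmDiff_eq_empty.mp hD
    have : koszulGen (T, T) = 0 := by
      rw [koszulGen, Kz_sqfree_tmul]
      exact Finset.sum_eq_zero fun i hi => by rw [ι_mul_wedge_of_mem hi, tmul_zero]
    rw [this]
    exact W.zero_mem
  set m := (T ∆ J).min' hD
  by_cases hmT : m ∈ T
  · exact mem_of_good hT hJ ⟨m, isLeading_min' hD hmT⟩
  have hm : m ∈ J \ T := by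
    have := Finset.mem_symmDiff.mp (Finset.min'_mem _ hD)
    exact Finset.mem_sdiff.mpr (by tauto)
  obtain ⟨ε, hε⟩ := smul_koszulGen_eq_neg_sum hm
  rw [← W.smul_mem_iff (Int.cast_ne_zero.mpr ε.ne_zero : ((ε : ℤ) : ℂ) ≠ 0), hε]
  refine W.neg_mem (W.sum_mem fun i hi => ?_)
  by_cases hiJ : i ∈ J
  · rw [ι_mul_wedge_of_mem (Finset.mem_erase.mpr ⟨ne_of_mem_of_not_mem hi hmT, hiJ⟩), tmul_zero,
      map_zero]
    exact W.zero_mem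
  have hiTJ : i ∈ T \ J := Finset.mem_sdiff.mpr ⟨hi, hiJ⟩
  obtain ⟨ε', hε'⟩ := ι_mul_wedge_of_notMem (fun h => hiJ (Finset.mem_of_mem_erase h))
  obtain ⟨hT', hJ'⟩ := card_exchange hm hiTJ
  rw [hε', tmul_smul, map_smul]
  exact W.smul_mem _ (mem_of_good (hT' ▸ hT) (hJ' ▸ hJ)
    ⟨m, isLeading_exchange hm (fun x hx => Finset.min'_le _ x hx) hiTJ⟩)

lemma span_koszulGen_eq_span_goodPairs (t p : ℕ) :
    Submodule.span ℂ
        (koszulGen '' {TJ : Finset (Fin d) × Finset (Fin d) | TJ.1.card = t ∧ TJ.2.card = p})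
      = Submodule.span ℂ
          (koszulGen '' (goodPairs (Fin d) t p : Set (Finset (Fin d) × Finset (Fin d)))) := by
  refine le_antisymm (Submodule.span_le.mpr ?_) (Submodule.span_mono (Set.image_mono ?_))
  · rintro _ ⟨⟨T, J⟩, ⟨hT, hJ⟩, rfl⟩
    exact koszulGen_mem_span_goodPairs hT hJ
  · exact fun TJ h => ⟨(mem_goodPairs.mp h).1, (mem_goodPairs.mp h).2.1⟩

noncomputable abbrev tensorBasis : Module.Basis ((Fin d →₀ ℕ) × Finset (Fin d)) ℂ
    (MvPolynomial (Fin d) ℂ ⊗[ℂ] ExteriorAlgebra ℂ (Fin d → ℂ)) :=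
  (basisMonomials (Fin d) ℂ).tensorProduct wedge

lemma tensorBasis_repr_koszulGen (T J A K : Finset (Fin d)) :
    tensorBasis.repr (koszulGen (T, J)) (sqfreeExp A, K)
      = ∑ i ∈ T, if T.erase i = A then wedge.repr (𝐞 i * wedge J) K else 0 := by
  rw [koszulGen, Kz_sqfree_tmul, map_sum, Finsupp.finsetSum_apply]
  refine Finset.sum_congr rfl fun i _ => ?_
  rw [Module.Basis.tensorProduct_repr_tmul_apply, ← basisMonomials_sqfreeExp,
    Module.Basis.repr_self, Finsupp.single_apply]
  simp [sqfreeExp_injective.eq_iff]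

lemma tensorBasis_repr_koszulGen_ne_zero_iff {T J T' J' : Finset (Fin d)} {m : Fin d}
    (hm : IsLeading T J m) (h' : IsGoodPair T' J') :
    tensorBasis.repr (koszulGen (T', J')) (sqfreeExp (T.erase m), insert m J) ≠ 0 ↔
      (T', J') = (T, J) := by
  rw [tensorBasis_repr_koszulGen]
  constructor
  · intro h
    obtain ⟨i, hi, hne⟩ := Finset.exists_ne_zero_of_sum_ne_zero h
    rw [ite_ne_right_iff] at hne
    obtain ⟨hiJ', hJ⟩ := wedge_repr_ι_mul_ne_zero hne.2
    obtain ⟨rfl, rfl, -⟩ :=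
      eq_of_erase_eq_of_insert_eq hm h' (Finset.mem_sdiff.mpr ⟨hi, hiJ'⟩) hne.1 hJ
    rfl
  · rintro ⟨⟩
    obtain ⟨hmT, hmJ⟩ := Finset.mem_sdiff.mp hm.1
    rw [Finset.sum_eq_single_of_mem m hmT, if_pos rfl]
    · exact wedge_repr_ι_mul_insert_ne_zero hmJ
    · intro i _ him
      refine if_neg fun h => Finset.notMem_erase m T ?_
      rw [← h]
      exact Finset.mem_erase.mpr ⟨Ne.symm him, hmT⟩

lemma linearIndependent_koszulGen (t p : ℕ) :
    LinearIndependent ℂ (fun c : goodPairs (Fin d) t p => koszulGen c.1) := by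
  choose m hm using fun c : goodPairs (Fin d) t p => (mem_goodPairs.mp c.2).2.2
  let f : goodPairs (Fin d) t p → Module.Dual ℂ _ := fun c =>
    tensorBasis.coord (sqfreeExp (c.1.1.erase (m c)), insert (m c) c.1.2)
  have hf : ∀ c c', f c (koszulGen c'.1) ≠ 0 ↔ c' = c := fun c c' => by
    rw [Module.Basis.coord_apply, tensorBasis_repr_koszulGen_ne_zero_iff (hm c)
      (mem_goodPairs.mp c'.2).2.2, Subtype.ext_iff]
  refine LinearIndependent.of_pairwise_dual_eq_zero_one _
    (fun c => (f c (koszulGen c.1))⁻¹ • f c) (fun c c' hcc' => ?_)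
    (fun c => inv_mul_cancel₀ ((hf c c).mpr rfl))
  change (f c (koszulGen c.1))⁻¹ * f c (koszulGen c'.1) = 0
  rw [not_not.mp (mt (hf c c').mp (Ne.symm hcc')), mul_zero]

lemma finrank_span_koszulGen (t p : ℕ) :
    Module.finrank ℂ (Submodule.span ℂ
      (koszulGen '' (goodPairs (Fin d) t p : Set (Finset (Fin d) × Finset (Fin d)))))
      = (goodPairs (Fin d) t p).card := by
  rw [Set.image_eq_range]
  exact (finrank_span_eq_card (linearIndependent_koszulGen t p)).trans (Fintype.card_coe _)

end Rank

end KoszulYoung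

theorem KYF_rank_monomial_general (d k p : ℕ) (hkd : k < d) :
    Module.finrank ℂ
        (Submodule.map (KYF (∏ i, X i : MvPolynomial (Fin d) ℂ)) (SkLp d k p))
      = ∑ s ∈ Finset.Icc (p - k) (min p (d - k - 1)),
          d.choose s * (d - s).choose (d - k + p - 2 * s)
            * (d - k + p - 2 * s - 1).choose (p - s) := by
  have hlow : p + (d - k) - Fintype.card (Fin d) = p - k := by rw [Fintype.card_fin]; omega
  rw [KoszulYoung.map_KYF_SkLp hkd.le, KoszulYoung.span_koszulGen_eq_span_goodPairs,
    KoszulYoung.finrank_span_koszulGen, KoszulYoung.card_goodPairs (by omega), hlow,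
    Fintype.card_fin]

/-- The rank of the Koszul Young flattening of `x_1 ⋯ x_d` equals `S(p,d,k)`. -/
theorem KYF_rank_monomial (d k p : ℕ) (hk : 1 ≤ k) (hkd : k < d) (hp : 1 ≤ p) (hpd : p < d) :
    Module.finrank ℂ
        (Submodule.map (KYF (∏ i, X i : MvPolynomial (Fin d) ℂ)) (SkLp d k p))
      = ∑ s ∈ Finset.Icc (p - k) (min p (d - k - 1)),
          d.choose s * (d - s).choose (d - k + p - 2 * s)
            * (d - k + p - 2 * s - 1).choose (p - s) :=
  KYF_rank_monomial_general d k p hkd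
end

section
/- For integers d, k, p with 1 ≤ k < d and 1 ≤ p < d, the two expressions Σ_{s=max{0,p-k}}^{min{p,d-k-1}} (d choose s)(d-s choose d-k+p-2s)(d-k+p-2s-1 choose p-s) and (d!/(p!(d-p-1)!)) · Σ_{s=max{0,p-k}}^{min{p,d-k-1}} (p choose s)(d-1-p choose s+k-p)/(d-k+p-2s) are equal. -/
theorem S_pdk_two_formulas (d k p : ℕ) (hk : 1 ≤ k) (hkd : k < d) (hp : 1 ≤ p) (hpd : p < d) :
    ∑ s ∈ Finset.Icc (p - k) (min p (d - k - 1)),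
        ((d.choose s : ℚ) * ((d - s).choose (d - k + p - 2 * s))
          * ((d - k + p - 2 * s - 1).choose (p - s)))
      = ((d.factorial : ℚ) / (p.factorial * (d - p - 1).factorial))
          * ∑ s ∈ Finset.Icc (p - k) (min p (d - k - 1)),
              ((p.choose s : ℚ) * ((d - 1 - p).choose (s + k - p))) / (d - k + p - 2 * s) := by
  rw [Finset.mul_sum]
  apply Finset.sum_congr rfl
  intro s hs
  rw [Finset.mem_Icc, le_min_iff] at hs
  have h1 := hs.1
  have h2 := hs.2.1
  have h3 := hs.2.2
  obtain ⟨a, b, c, hp2, hk2, hd⟩ : ∃ a b c, p = s + a ∧ k = a + b ∧ d = s + a + b + c + 1 :=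
    ⟨p - s, s + k - p, d - k - 1 - s, by omega, by omega, by omega⟩
  subst hp2 hk2 hd
  rw [show s + a + b + c + 1 - s = a + b + c + 1 from by omega,
      show s + a + b + c + 1 - (a + b) + (s + a) - 2 * s = a + c + 1 from by omega,
      show a + c + 1 - 1 = a + c from by omega,
      show s + a - s = a from by omega,
      show s + (a + b) - (s + a) = b from by omega,
      show s + a + b + c + 1 - 1 - (s + a) = b + c from by omega,
      show s + a + b + c + 1 - (s + a) - 1 = b + c from by omega]
  rw [Nat.cast_choose ℚ (show s ≤ s + a + b + c + 1 from by omega),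
      Nat.cast_choose ℚ (show a + c + 1 ≤ a + b + c + 1 from by omega),
      Nat.cast_choose ℚ (show a ≤ a + c from by omega),
      Nat.cast_choose ℚ (show s ≤ s + a from by omega),
      Nat.cast_choose ℚ (show b ≤ b + c from by omega),
      show s + a + b + c + 1 - s = a + b + c + 1 from by omega,
      show a + b + c + 1 - (a + c + 1) = b from by omega,
      show a + c - a = c from by omega,
      show s + a - s = a from by omega,
      show b + c - b = c from by omega,
      show (a + b + c + 1).factorial = (a+b+c+1) * (a+b+c).factorial from rfl,
      show (a + c + 1).factorial = (a+c+1) * (a+c).factorial from rfl]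
  have hne : ∀ n : ℕ, (n.factorial : ℚ) ≠ 0 := fun n => Nat.cast_ne_zero.mpr n.factorial_ne_zero
  have h4 : ((s:ℚ) + a + b + c + 1) - (a + b) + (s + a) - 2 * s = (a:ℚ) + c + 1 := by ring
  push_cast
  rw [h4]
  have h5 : ((a:ℚ) + c + 1) ≠ 0 := by positivity
  field_simp
end

section
/- Let P = (x_1^{δ₂} + ··· + x_r^{δ₂})^{δ₁} ∈ S^d C^r with d = δ₁δ₂. For multidegrees α = (α_1,...,α_r) and η = (η_1,...,η_r) each summing to k, the images P_{k,d-k}(y^α) and P_{k,d-k}(y^η) have the same support (set of monomials with nonzero coefficient) if and only if α_i ≡ η_i (mod δ₂) for each i = 1,...,r. -/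
/-!
Differentiating by `∂^α` only shifts exponents, so in characteristic zero
`m ∈ supp ∂^α P ↔ m + α ∈ supp P`. As `P` is `(x₁ + ⋯ + x_r)^{δ₁}` with every `x_i` replaced by
`x_i^{δ₂}`, and the multinomial coefficients are positive, `supp P` consists exactly of the
exponents of degree `δ₁δ₂` whose entries are all divisible by `δ₂`. So `m` lies in the support of
`∂^α P` (resp. `∂^η P`) iff `δ₂ ∣ m_i + α_i` (resp. `δ₂ ∣ m_i + η_i`) for all `i`, plus one and
the same degree condition; these agree for all `m` when `α ≡ η (mod δ₂)`, and conversely any `m` in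
the nonempty support of `∂^α P` forces `α ≡ η (mod δ₂)`.
-/

open MvPolynomial TensorProduct

namespace MvPolynomial

section PDeriv

variable {σ R : Type*} [CommSemiring R] [NoZeroDivisors R] [CharZero R]

theorem mem_support_pderiv_iff (i : σ) (f : MvPolynomial σ R) (m : σ →₀ ℕ) :
    m ∈ (pderiv i f).support ↔ m + Finsupp.single i 1 ∈ f.support := by
  have hcoeff : ((m i : R) + 1) ≠ 0 := by exact_mod_cast (m i).succ_ne_zero
  simp only [mem_support_iff, coeff_pderiv, ne_eq, mul_eq_zero, hcoeff, or_false]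

theorem mem_support_pderiv_pow_iff (i : σ) (n : ℕ) (f : MvPolynomial σ R) (m : σ →₀ ℕ) :
    m ∈ (((pderiv i).toLinearMap ^ n : Module.End R (MvPolynomial σ R)) f).support ↔
      m + Finsupp.single i n ∈ f.support := by
  induction n generalizing m with
  | zero => simp
  | succ n ih =>
    rw [pow_succ', Module.End.mul_apply, Derivation.coeFn_coe, mem_support_pderiv_iff, ih,
      add_assoc, ← Finsupp.single_add, add_comm 1 n]

theorem mem_support_list_prod_pderiv_pow_iff (L : List σ) (α : σ → ℕ) (f : MvPolynomial σ R)
    (m : σ →₀ ℕ) :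
    m ∈ ((L.map fun i => ((pderiv i).toLinearMap ^ α i : Module.End R (MvPolynomial σ R))).prod
        f).support ↔ m + (L.map fun i => Finsupp.single i (α i)).sum ∈ f.support := by
  induction L generalizing m with
  | nil => simp
  | cons i L ih =>
    rw [List.map_cons, List.prod_cons, Module.End.mul_apply, mem_support_pderiv_pow_iff, ih,
      List.map_cons, List.sum_cons, add_assoc]

end PDeriv

section SumXPow

variable {σ R : Type*} [Fintype σ] [CommSemiring R] [CharZero R]

theorem mem_support_sum_X_pow_iff (n : ℕ) (d : σ →₀ ℕ) :
    d ∈ ((∑ i, X i : MvPolynomial σ R) ^ n).support ↔ d.degree = n := by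
  rw [mem_support_iff, coeff_sum_X_pow_of_fintype, Nat.cast_ne_zero, ne_eq, ite_eq_right_iff,
    Classical.not_imp]
  exact and_iff_left (Nat.multinomial_pos _ _).ne'

theorem mem_support_sum_X_pow_pow_iff {p : ℕ} (hp : 0 < p) (n : ℕ) (d : σ →₀ ℕ) :
    d ∈ ((∑ i, X i ^ p : MvPolynomial σ R) ^ n).support ↔
      (∀ i, p ∣ d i) ∧ d.degree = p * n := by
  classical
  have hexpand : (∑ i, X i ^ p : MvPolynomial σ R) ^ n = expand p ((∑ i, X i) ^ n) := by simp
  rw [hexpand, support_expand _ hp.ne', Finset.mem_image]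
  constructor
  · rintro ⟨e, he, rfl⟩
    rw [mem_support_sum_X_pow_iff] at he
    exact ⟨fun i => by simp, by simp [he]⟩
  · rintro ⟨hdvd, hdeg⟩
    choose e he using hdvd
    have hd : d = p • ∑ i, Finsupp.single i (e i) := by
      ext i
      rw [Finsupp.smul_apply, Finsupp.coe_univ_sum_single, he i, smul_eq_mul]
    refine ⟨_, ?_, hd.symm⟩
    rw [hd, map_nsmul, smul_eq_mul] at hdeg
    rw [mem_support_sum_X_pow_iff]
    exact Nat.eq_of_mul_eq_mul_left hp hdeg

end SumXPow

end MvPolynomial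

theorem mem_support_Dop_iff {m : ℕ} (α : Fin m → ℕ) (f : MvPolynomial (Fin m) ℂ)
    (s : Fin m →₀ ℕ) :
    s ∈ (Dop α f).support ↔ s + ∑ i, Finsupp.single i (α i) ∈ f.support := by
  rw [Dop, List.ofFn_eq_map, mem_support_list_prod_pderiv_pow_iff, ← List.ofFn_eq_map,
    List.sum_ofFn]

theorem mem_support_Dop_sum_X_pow_pow_iff {r p n : ℕ} (hp : 0 < p) (α : Fin r → ℕ)
    (s : Fin r →₀ ℕ) :
    s ∈ (Dop α ((∑ i, X i ^ p : MvPolynomial (Fin r) ℂ) ^ n)).support ↔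
      (∀ i, p ∣ s i + α i) ∧ s.degree + ∑ i, α i = p * n := by
  simp only [mem_support_Dop_iff, mem_support_sum_X_pow_pow_iff hp, Finsupp.add_apply,
    Finsupp.coe_univ_sum_single, map_add, map_sum, Finsupp.degree_single]

theorem support_flattening_iff_general (δ₁ δ₂ r k : ℕ) (hδ₂ : 0 < δ₂)
    (α η : Fin r → ℕ) (hα : ∑ i, α i = k) (hη : ∑ i, η i = k)
    (hαne : Dop α ((∑ i, X i ^ δ₂ : MvPolynomial (Fin r) ℂ) ^ δ₁) ≠ 0) :
    (Dop α ((∑ i, X i ^ δ₂ : MvPolynomial (Fin r) ℂ) ^ δ₁)).support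
        = (Dop η ((∑ i, X i ^ δ₂ : MvPolynomial (Fin r) ℂ) ^ δ₁)).support
      ↔ ∀ i, (δ₂ : ℤ) ∣ (α i : ℤ) - (η i : ℤ) := by
  simp_rw [← Nat.modEq_iff_dvd]
  constructor
  · intro hsupp i
    obtain ⟨s, hsα⟩ := support_nonempty.mpr hαne
    have hsη := hsupp ▸ hsα
    rw [mem_support_Dop_sum_X_pow_pow_iff hδ₂] at hsα hsη
    exact Nat.ModEq.add_left_cancel' (s i)
      ((Nat.modEq_zero_iff_dvd.mpr (hsη.1 i)).trans (Nat.modEq_zero_iff_dvd.mpr (hsα.1 i)).symm)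
  · intro hmod
    ext s
    simp only [mem_support_Dop_sum_X_pow_pow_iff hδ₂, hα, hη]
    exact and_congr_left' (forall_congr' fun i => ((hmod i).add_left (s i)).dvd_iff dvd_rfl).symm

/-- For `P = (x_1^{δ₂} + ⋯ + x_r^{δ₂})^{δ₁}`, two partial derivatives
`∂^α P` and `∂^η P` (with `|α| = |η| = k`, both nonzero) have the same
support iff `α_i ≡ η_i (mod δ₂)` for every `i`. -/
theorem support_flattening_iff (δ₁ δ₂ r k : ℕ) (hδ₁ : 0 < δ₁) (hδ₂ : 0 < δ₂)
    (α η : Fin r → ℕ) (hα : ∑ i, α i = k) (hη : ∑ i, η i = k)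
    (hαne : Dop α ((∑ i, X i ^ δ₂ : MvPolynomial (Fin r) ℂ) ^ δ₁) ≠ 0)
    (hηne : Dop η ((∑ i, X i ^ δ₂ : MvPolynomial (Fin r) ℂ) ^ δ₁) ≠ 0) :
    (Dop α ((∑ i, X i ^ δ₂ : MvPolynomial (Fin r) ℂ) ^ δ₁)).support
        = (Dop η ((∑ i, X i ^ δ₂ : MvPolynomial (Fin r) ℂ) ^ δ₁)).support
      ↔ ∀ i, (δ₂ : ℤ) ∣ (α i : ℤ) - (η i : ℤ) :=
  support_flattening_iff_general δ₁ δ₂ r k hδ₂ α η hα hη hαne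
end
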